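/- arXiv:1806.05619 — 4 statements merged into one kernel-verified Lean document; each statement's English description precedes it below -/
import Mathlib

section
/- Let ρ > 1, β > 0, γ > 0, λ > 0 be real numbers, L a natural number, R a positive integer, K > 0 a constant, C_0, ..., C_L positive real numbers (the per-sample costs), and let h_0, ..., h_{L+1} be positive reals satisfying h_ℓ = ρ · h_{ℓ+1} for every ℓ = 0, ..., L. Define the level sample sizes N_ℓ = (K · h_ℓ^{β+γ})^{λ/(λ+1)} for ℓ = 0, ..., L+1, and the recycled sample sizes N'_ℓ = N_ℓ − N_{ℓ+1}. Then the cost with sample recycling equals the cost without recycling reduced by the factor 1 − ρ^{−(β+γ)λ/(λ+1)}; that is, Σ_{ℓ=0}^{L} R · N'_ℓ · C_ℓ = (1 − ρ^{−(β+γ)λ/(λ+1)}) · Σ_{ℓ=0}^{L} R · N_ℓ · C_ℓ. -/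
/-!
Under geometric refinement `h ℓ = ρ * h (ℓ + 1)` the sample sizes decay geometrically,
`N (ℓ + 1) = ρ ^ (-(β + γ) λ / (λ + 1)) * N ℓ`, so every recycled sample size `N ℓ - N (ℓ + 1)`
is the same fraction `1 - ρ ^ (-(β + γ) λ / (λ + 1))` of `N ℓ`, and the cost sum scales by it.
-/

open Finset Real

lemma mul_rpow_rpow_scale {K ρ x : ℝ} (hK : 0 ≤ K) (hρ : 0 < ρ) (hx : 0 ≤ x) (a b : ℝ) :
    (K * x ^ a) ^ b = ρ ^ (-(a * b)) * (K * (ρ * x) ^ a) ^ b := by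
  rw [mul_rpow hρ.le hx, mul_left_comm,
    mul_rpow (rpow_nonneg hρ.le _) (mul_nonneg hK (rpow_nonneg hx _)), ← rpow_mul hρ.le,
    ← mul_assoc, ← rpow_add hρ, neg_add_cancel, rpow_zero, one_mul]

lemma sum_mul_sub_succ_mul_eq_of_geometric {L : ℕ} {q : ℝ} (c : ℝ) {C N N' : ℕ → ℝ}
    (hq : ∀ ℓ ≤ L, N (ℓ + 1) = q * N ℓ) (hN' : ∀ ℓ ≤ L, N' ℓ = N ℓ - N (ℓ + 1)) :
    ∑ ℓ ∈ range (L + 1), c * N' ℓ * C ℓ = (1 - q) * ∑ ℓ ∈ range (L + 1), c * N ℓ * C ℓ := by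
  rw [mul_sum]
  refine sum_congr rfl fun ℓ hℓ => ?_
  have hℓL : ℓ ≤ L := mem_range_succ_iff.mp hℓ
  rw [hN' ℓ hℓL, hq ℓ hℓL]
  ring

theorem mgmlqmc_cost_reduction_general
    (ρ β γ lam K : ℝ) (hρ : 1 < ρ)
    (hK : 0 < K) (L : ℕ) (R : ℕ)
    (C h : ℕ → ℝ)
    (hh : ∀ ℓ ≤ L + 1, 0 < h ℓ)
    (hgeo : ∀ ℓ ≤ L, h ℓ = ρ * h (ℓ + 1))
    (N N' : ℕ → ℝ)
    (hN : ∀ ℓ ≤ L + 1, N ℓ = (K * h ℓ ^ (β + γ)) ^ (lam / (lam + 1)))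
    (hN' : ∀ ℓ ≤ L, N' ℓ = N ℓ - N (ℓ + 1)) :
    ∑ ℓ ∈ range (L + 1), (R : ℝ) * N' ℓ * C ℓ =
      (1 - ρ ^ (-(β + γ) * lam / (lam + 1))) *
        ∑ ℓ ∈ range (L + 1), (R : ℝ) * N ℓ * C ℓ := by
  have hq : ∀ ℓ ≤ L, N (ℓ + 1) = ρ ^ (-(β + γ) * lam / (lam + 1)) * N ℓ := by
    intro ℓ hℓ
    rw [hN ℓ (by omega), hN (ℓ + 1) (by omega), hgeo ℓ hℓ, mul_div_assoc, neg_mul]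
    exact mul_rpow_rpow_scale hK.le (zero_lt_one.trans hρ) (hh (ℓ + 1) (by omega)).le _ _
  exact sum_mul_sub_succ_mul_eq_of_geometric _ hq hN'

/-- Proposition 1 (cost reduction factor of MG-ML(Q)MC with geometric refinement). -/
theorem mgmlqmc_cost_reduction
    (ρ β γ lam K : ℝ) (hρ : 1 < ρ) (hβ : 0 < β) (hγ : 0 < γ) (hlam : 0 < lam)
    (hK : 0 < K) (L : ℕ) (R : ℕ) (hR : 0 < R)
    (C h : ℕ → ℝ)
    (hC : ∀ ℓ ≤ L, 0 < C ℓ)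
    (hh : ∀ ℓ ≤ L + 1, 0 < h ℓ)
    (hgeo : ∀ ℓ ≤ L, h ℓ = ρ * h (ℓ + 1))
    (N N' : ℕ → ℝ)
    (hN : ∀ ℓ ≤ L + 1, N ℓ = (K * h ℓ ^ (β + γ)) ^ (lam / (lam + 1)))
    (hN' : ∀ ℓ ≤ L, N' ℓ = N ℓ - N (ℓ + 1)) :
    ∑ ℓ ∈ range (L + 1), (R : ℝ) * N' ℓ * C ℓ =
      (1 - ρ ^ (-(β + γ) * lam / (lam + 1))) *
        ∑ ℓ ∈ range (L + 1), (R : ℝ) * N ℓ * C ℓ :=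
  mgmlqmc_cost_reduction_general ρ β γ lam K hρ hK L R C h hh hgeo N N' hN hN'
end

section
/- Let L be a natural number, λ > 0, ε > 0, and let a_0, ..., a_L > 0 (the per-level costs) and b_0, ..., b_L > 0 (the per-level variance contributions) be real numbers. Define S = Σ_{τ=0}^{L} a_τ^{1/(λ+1)} · b_τ^{λ/(λ+1)} and N*_ℓ = ((2/ε²) · S)^{λ} · (b_ℓ / a_ℓ)^{λ/(λ+1)}. Then: (i) the sequence (N*_ℓ) satisfies the constraint Σ_{ℓ=0}^{L} b_ℓ · (N*_ℓ)^{−1/λ} = ε²/2 with equality; (ii) its cost is Σ_{ℓ=0}^{L} a_ℓ · N*_ℓ = (2/ε²)^{λ} · S^{λ+1}; and (iii) for every sequence of positive reals N_0, ..., N_L with Σ_{ℓ=0}^{L} b_ℓ · N_ℓ^{−1/λ} ≤ ε²/2, one has Σ_{ℓ=0}^{L} a_ℓ · N_ℓ ≥ (2/ε²)^{λ} · S^{λ+1}. Hence (N*_ℓ) minimizes the cost subject to the variance constraint. -/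
open Finset Real

/-! The weight `a ^ (1 / (λ + 1)) * b ^ (λ / (λ + 1))` of a level is unchanged when its cost `a`
and variance `b` are replaced by `a * N` and `b * N ^ (-1 / λ)`. Hölder's inequality with the
exponents `λ + 1` and `(λ + 1) / λ` therefore bounds `S` by `cost ^ (1 / (λ + 1))` times
`variance ^ (λ / (λ + 1))` for every allocation `N`, which is the lower bound. `N*` is the case of
equality: it makes both `a * N*` and `b * N* ^ (-1 / λ)` proportional to the weights. -/

noncomputable def levelWeight (lam a b : ℝ) : ℝ := a ^ (1 / (lam + 1)) * b ^ (lam / (lam + 1))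

noncomputable def optimalSamples (lam c a b : ℝ) : ℝ := c ^ lam * (b / a) ^ (lam / (lam + 1))

lemma levelWeight_pos {lam a b : ℝ} (ha : 0 < a) (hb : 0 < b) : 0 < levelWeight lam a b := by
  unfold levelWeight
  positivity

lemma levelWeight_nonneg {lam a b : ℝ} (ha : 0 ≤ a) (hb : 0 ≤ b) : 0 ≤ levelWeight lam a b :=
  mul_nonneg (rpow_nonneg ha _) (rpow_nonneg hb _)

lemma levelWeight_mul_rpow_neg {lam a b N : ℝ} (ha : 0 ≤ a) (hb : 0 ≤ b) (hN : 0 < N)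
    (hlam : lam ≠ 0) :
    levelWeight lam (a * N) (b * N ^ (-1 / lam)) = levelWeight lam a b := by
  have hN1 : N ^ (1 / (lam + 1)) * N ^ (-1 / lam * (lam / (lam + 1))) = 1 := by
    rw [← rpow_add hN, div_mul_div_comm, mul_comm lam (lam + 1), mul_div_mul_right _ _ hlam,
      ← add_div, add_neg_cancel, zero_div, rpow_zero]
  unfold levelWeight
  rw [mul_rpow ha hN.le, mul_rpow hb (rpow_nonneg hN.le _), ← rpow_mul hN.le]
  linear_combination a ^ (1 / (lam + 1)) * b ^ (lam / (lam + 1)) * hN1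

lemma mul_optimalSamples {lam c a b : ℝ} (ha : 0 < a) (hb : 0 < b) (hc : 0 < c)
    (hlam : lam + 1 ≠ 0) :
    a * optimalSamples lam c a b = c ^ lam * levelWeight lam a b := by
  refine log_injOn_pos (Set.mem_Ioi.2 (by unfold optimalSamples; positivity))
    (Set.mem_Ioi.2 (by unfold levelWeight; positivity)) ?_
  unfold optimalSamples levelWeight
  simp (disch := positivity) only [log_mul, log_rpow, log_div]
  field_simp
  ring

lemma mul_optimalSamples_rpow {lam c a b : ℝ} (ha : 0 < a) (hb : 0 < b) (hc : 0 < c)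
    (hlam : 0 < lam) :
    b * optimalSamples lam c a b ^ (-1 / lam) = c⁻¹ * levelWeight lam a b := by
  refine log_injOn_pos (Set.mem_Ioi.2 (by unfold optimalSamples; positivity))
    (Set.mem_Ioi.2 (by unfold levelWeight; positivity)) ?_
  unfold optimalSamples levelWeight
  simp (disch := positivity) only [log_mul, log_rpow, log_div, log_inv]
  field_simp
  ring

section
variable {ι : Type*} (s : Finset ι)

lemma sum_rpow_one_div_mul_rpow_one_div_le {x y : ι → ℝ} {p q : ℝ} (hpq : p.HolderConjugate q)
    (hx : ∀ i ∈ s, 0 ≤ x i) (hy : ∀ i ∈ s, 0 ≤ y i) :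
    ∑ i ∈ s, x i ^ (1 / p) * y i ^ (1 / q)
      ≤ (∑ i ∈ s, x i) ^ (1 / p) * (∑ i ∈ s, y i) ^ (1 / q) := by
  have h := inner_le_Lp_mul_Lq_of_nonneg s hpq (f := fun i ↦ x i ^ (1 / p))
    (g := fun i ↦ y i ^ (1 / q)) (fun i hi ↦ rpow_nonneg (hx i hi) _)
    (fun i hi ↦ rpow_nonneg (hy i hi) _)
  convert h using 3 <;> refine sum_congr rfl fun i hi ↦ ?_
  · rw [← rpow_mul (hx i hi), one_div_mul_cancel hpq.ne_zero, rpow_one]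
  · rw [← rpow_mul (hy i hi), one_div_mul_cancel hpq.symm.ne_zero, rpow_one]

variable {a b N : ι → ℝ} {lam c V : ℝ}

lemma sum_levelWeight_rpow_le (hlam : 0 < lam) (ha : ∀ i ∈ s, 0 ≤ a i) (hb : ∀ i ∈ s, 0 ≤ b i)
    (hN : ∀ i ∈ s, 0 < N i) (hV : ∑ i ∈ s, b i * N i ^ (-1 / lam) ≤ V) :
    (∑ i ∈ s, levelWeight lam (a i) (b i)) ^ (lam + 1) ≤ V ^ lam * ∑ i ∈ s, a i * N i := by
  set C := ∑ i ∈ s, a i * N i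
  have hC : 0 ≤ C := sum_nonneg fun i hi ↦ mul_nonneg (ha i hi) (hN i hi).le
  have hsum_nonneg : 0 ≤ ∑ i ∈ s, b i * N i ^ (-1 / lam) :=
    sum_nonneg fun i hi ↦ mul_nonneg (hb i hi) (rpow_nonneg (hN i hi).le _)
  have hpq : (lam + 1).HolderConjugate ((lam + 1) / lam) := by
    rw [holderConjugate_iff]
    refine ⟨by linarith, ?_⟩
    field_simp
    ring
  have holder :
      ∑ i ∈ s, levelWeight lam (a i) (b i) ≤ C ^ (1 / (lam + 1)) * V ^ (lam / (lam + 1)) :=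
    calc ∑ i ∈ s, levelWeight lam (a i) (b i)
        = ∑ i ∈ s, levelWeight lam (a i * N i) (b i * N i ^ (-1 / lam)) :=
          sum_congr rfl fun i hi ↦
            (levelWeight_mul_rpow_neg (ha i hi) (hb i hi) (hN i hi) hlam.ne').symm
      _ ≤ C ^ (1 / (lam + 1)) * (∑ i ∈ s, b i * N i ^ (-1 / lam)) ^ (lam / (lam + 1)) := by
          simpa only [levelWeight, one_div_div] using sum_rpow_one_div_mul_rpow_one_div_le s hpq
            (fun i hi ↦ mul_nonneg (ha i hi) (hN i hi).le)
            (fun i hi ↦ mul_nonneg (hb i hi) (rpow_nonneg (hN i hi).le _))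
      _ ≤ C ^ (1 / (lam + 1)) * V ^ (lam / (lam + 1)) := by gcongr
  have hV_nonneg : 0 ≤ V := hsum_nonneg.trans hV
  calc (∑ i ∈ s, levelWeight lam (a i) (b i)) ^ (lam + 1)
      ≤ (C ^ (1 / (lam + 1)) * V ^ (lam / (lam + 1))) ^ (lam + 1) := by
        gcongr
        exact sum_nonneg fun i hi ↦ levelWeight_nonneg (ha i hi) (hb i hi)
    _ = V ^ lam * C := by
        rw [mul_rpow (rpow_nonneg hC _) (rpow_nonneg hV_nonneg _), ← rpow_mul hC, ← rpow_mul hV_nonneg]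
        field_simp
        rw [rpow_one, mul_comm]

lemma sum_mul_eq_of_optimalSamples (hlam : lam + 1 ≠ 0) (ha : ∀ i ∈ s, 0 < a i)
    (hb : ∀ i ∈ s, 0 < b i) (hc : 0 < c) (hN : ∀ i ∈ s, N i = optimalSamples lam c (a i) (b i)) :
    ∑ i ∈ s, a i * N i = c ^ lam * ∑ i ∈ s, levelWeight lam (a i) (b i) := by
  rw [mul_sum]
  exact sum_congr rfl fun i hi ↦ by rw [hN i hi, mul_optimalSamples (ha i hi) (hb i hi) hc hlam]

lemma sum_mul_rpow_eq_of_optimalSamples (hlam : 0 < lam) (ha : ∀ i ∈ s, 0 < a i)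
    (hb : ∀ i ∈ s, 0 < b i) (hc : 0 < c) (hN : ∀ i ∈ s, N i = optimalSamples lam c (a i) (b i)) :
    ∑ i ∈ s, b i * N i ^ (-1 / lam) = c⁻¹ * ∑ i ∈ s, levelWeight lam (a i) (b i) := by
  rw [mul_sum]
  exact sum_congr rfl fun i hi ↦ by
    rw [hN i hi, mul_optimalSamples_rpow (ha i hi) (hb i hi) hc hlam]

end

/-- Constrained optimization underlying the optimal MLQMC sample sizes: the
explicit choice `Nstar` saturates the variance constraint and minimizes the
total cost among all positive sample allocations satisfying the constraint. -/
theorem mlqmc_optimal_allocation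
    (L : ℕ) (lam ε : ℝ) (hlam : 0 < lam) (hε : 0 < ε)
    (a b : ℕ → ℝ)
    (ha : ∀ ℓ ≤ L, 0 < a ℓ) (hb : ∀ ℓ ≤ L, 0 < b ℓ)
    (S : ℝ)
    (hS : S = ∑ τ ∈ range (L + 1), a τ ^ (1 / (lam + 1)) * b τ ^ (lam / (lam + 1)))
    (Nstar : ℕ → ℝ)
    (hNstar : ∀ ℓ ≤ L, Nstar ℓ = (2 / ε ^ 2 * S) ^ lam * (b ℓ / a ℓ) ^ (lam / (lam + 1))) :
    (∑ ℓ ∈ range (L + 1), b ℓ * Nstar ℓ ^ (-1 / lam) = ε ^ 2 / 2) ∧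
    (∑ ℓ ∈ range (L + 1), a ℓ * Nstar ℓ = (2 / ε ^ 2) ^ lam * S ^ (lam + 1)) ∧
    (∀ N : ℕ → ℝ, (∀ ℓ ≤ L, 0 < N ℓ) →
      ∑ ℓ ∈ range (L + 1), b ℓ * N ℓ ^ (-1 / lam) ≤ ε ^ 2 / 2 →
      (2 / ε ^ 2) ^ lam * S ^ (lam + 1) ≤ ∑ ℓ ∈ range (L + 1), a ℓ * N ℓ) := by
  have hL : ∀ ℓ ∈ range (L + 1), ℓ ≤ L := fun ℓ hℓ ↦ Nat.lt_succ_iff.mp (mem_range.mp hℓ)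
  replace ha := fun ℓ hℓ ↦ ha ℓ (hL ℓ hℓ)
  replace hb := fun ℓ hℓ ↦ hb ℓ (hL ℓ hℓ)
  replace hS : S = ∑ ℓ ∈ range (L + 1), levelWeight lam (a ℓ) (b ℓ) := hS
  replace hNstar : ∀ ℓ ∈ range (L + 1), Nstar ℓ = optimalSamples lam (2 / ε ^ 2 * S) (a ℓ) (b ℓ) :=
    fun ℓ hℓ ↦ hNstar ℓ (hL ℓ hℓ)
  have hS0 : 0 < S :=
    hS ▸ sum_pos (fun ℓ hℓ ↦ levelWeight_pos (ha ℓ hℓ) (hb ℓ hℓ)) nonempty_range_add_one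
  have hc : 0 < 2 / ε ^ 2 * S := by positivity
  refine ⟨?_, ?_, fun N hN hV ↦ ?_⟩
  · rw [sum_mul_rpow_eq_of_optimalSamples _ hlam ha hb hc hNstar, ← hS]
    field_simp
  · rw [sum_mul_eq_of_optimalSamples _ (by positivity) ha hb hc hNstar, ← hS,
      mul_rpow (by positivity) hS0.le, rpow_add_one hS0.ne', mul_assoc]
  · calc (2 / ε ^ 2) ^ lam * S ^ (lam + 1)
        ≤ (2 / ε ^ 2) ^ lam * ((ε ^ 2 / 2) ^ lam * ∑ ℓ ∈ range (L + 1), a ℓ * N ℓ) := by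
          rw [hS]
          gcongr
          exact sum_levelWeight_rpow_le _ hlam (fun ℓ hℓ ↦ (ha ℓ hℓ).le) (fun ℓ hℓ ↦ (hb ℓ hℓ).le)
            (fun ℓ hℓ ↦ hN ℓ (hL ℓ hℓ)) hV
      _ = ∑ ℓ ∈ range (L + 1), a ℓ * N ℓ := by
          rw [← mul_assoc, ← mul_rpow (by positivity) (by positivity),
            div_mul_div_cancel₀ (by positivity), div_self two_ne_zero, one_rpow, one_mul]
end

section
/- Let L be a natural number, ε > 0, and let V_0, ..., V_L > 0 (the level variances) and C_0, ..., C_L > 0 (the per-sample costs) be real numbers. Define N_ℓ = (2/ε²) · √(V_ℓ / C_ℓ) · Σ_{τ=0}^{L} √(V_τ · C_τ). Then: (i) Σ_{ℓ=0}^{L} V_ℓ / N_ℓ = ε²/2; (ii) the total cost is Σ_{ℓ=0}^{L} N_ℓ · C_ℓ = (2/ε²) · (Σ_{ℓ=0}^{L} √(V_ℓ · C_ℓ))²; and (iii) for every sequence of positive reals M_0, ..., M_L satisfying Σ_{ℓ=0}^{L} V_ℓ / M_ℓ ≤ ε²/2, one has Σ_{ℓ=0}^{L} M_ℓ · C_ℓ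 ≥ (2/ε²) · (Σ_{ℓ=0}^{L} √(V_ℓ · C_ℓ))². Hence the choice N_ℓ minimizes the total cost subject to the variance constraint. -/
open Finset Real

/-!
Writing `√(V C) = √(V / M) · √(M C)`, Cauchy–Schwarz gives
`(∑ √(V C))² ≤ (∑ V / M) · (∑ M C)` for every positive allocation `M`, so the variance bound
`∑ V / M ≤ ε² / 2` forces the cost `∑ M C` to be at least `(2 / ε²) (∑ √(V C))²`.
Equality in Cauchy–Schwarz holds when `√(V / M)` is proportional to `√(M C)`, i.e. `M ∝ √(V / C)`;
the constant is fixed by making the variance bound an equality.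
-/

theorem mul_sqrt_div_mul (κ v : ℝ) {c : ℝ} (hc : 0 ≤ c) :
    κ * √(v / c) * c = κ * √(v * c) := by
  rw [sqrt_div' v hc, sqrt_mul' v hc]
  rcases hc.eq_or_lt with rfl | hc
  · simp
  · have := sqrt_pos.2 hc
    field_simp
    rw [sq_sqrt hc.le]

theorem div_mul_sqrt_div (κ : ℝ) {v c : ℝ} (hv : 0 ≤ v) (hc : 0 ≤ c) :
    v / (κ * √(v / c)) = √(v * c) / κ := by
  rw [sqrt_div hv, sqrt_mul hv]
  rcases hv.eq_or_lt with rfl | hv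
  · simp
  have := sqrt_pos.2 hv
  rcases hc.eq_or_lt with rfl | hc
  · simp
  have := sqrt_pos.2 hc
  rcases eq_or_ne κ 0 with rfl | hκ
  · simp
  field_simp
  rw [sq_sqrt hv.le]

theorem sq_sum_sqrt_mul_le_sum_div_mul_sum_mul {ι : Type*} (s : Finset ι) {v c m : ι → ℝ}
    (hv : ∀ i ∈ s, 0 ≤ v i) (hc : ∀ i ∈ s, 0 ≤ c i) (hm : ∀ i ∈ s, 0 < m i) :
    (∑ i ∈ s, √(v i * c i)) ^ 2 ≤ (∑ i ∈ s, v i / m i) * ∑ i ∈ s, m i * c i := by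
  refine sum_sq_le_sum_mul_sum_of_sq_le_mul s (fun i hi ↦ div_nonneg (hv i hi) (hm i hi).le)
    (fun i hi ↦ mul_nonneg (hm i hi).le (hc i hi)) fun i hi ↦ le_of_eq ?_
  rw [sq_sqrt (mul_nonneg (hv i hi) (hc i hi))]
  field_simp [(hm i hi).ne']

section Allocation

variable {ι : Type*} (s : Finset ι) (ε : ℝ) (V C : ι → ℝ)

noncomputable def optimalAllocation (i : ι) : ℝ :=
  2 / ε ^ 2 * (∑ j ∈ s, √(V j * C j)) * √(V i / C i)

variable {s ε V C}

theorem sum_div_optimalAllocation (hε : ε ≠ 0) (hV : ∀ i ∈ s, 0 ≤ V i) (hC : ∀ i ∈ s, 0 ≤ C i)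
    (hS : ∑ i ∈ s, √(V i * C i) ≠ 0) :
    ∑ i ∈ s, V i / optimalAllocation s ε V C i = ε ^ 2 / 2 := by
  simp only [optimalAllocation]
  rw [sum_congr rfl fun i hi ↦ div_mul_sqrt_div _ (hV i hi) (hC i hi), ← sum_div]
  field_simp

theorem sum_optimalAllocation_mul (hC : ∀ i ∈ s, 0 ≤ C i) :
    ∑ i ∈ s, optimalAllocation s ε V C i * C i =
      2 / ε ^ 2 * (∑ i ∈ s, √(V i * C i)) ^ 2 := by
  simp only [optimalAllocation]
  rw [sum_congr rfl fun i hi ↦ mul_sqrt_div_mul _ (V i) (hC i hi), ← mul_sum]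
  ring

theorem optimalCost_le_sum_mul (hε : ε ≠ 0) (hV : ∀ i ∈ s, 0 ≤ V i) (hC : ∀ i ∈ s, 0 ≤ C i)
    {M : ι → ℝ} (hM : ∀ i ∈ s, 0 < M i) (hvar : ∑ i ∈ s, V i / M i ≤ ε ^ 2 / 2) :
    2 / ε ^ 2 * (∑ i ∈ s, √(V i * C i)) ^ 2 ≤ ∑ i ∈ s, M i * C i := by
  have hε2 : 0 < ε ^ 2 := by positivity
  have hcost : 0 ≤ ∑ i ∈ s, M i * C i := sum_nonneg fun i hi ↦ mul_nonneg (hM i hi).le (hC i hi)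
  rw [div_mul_eq_mul_div, div_le_iff₀ hε2]
  calc 2 * (∑ i ∈ s, √(V i * C i)) ^ 2
      ≤ 2 * ((∑ i ∈ s, V i / M i) * ∑ i ∈ s, M i * C i) := by
        gcongr; exact sq_sum_sqrt_mul_le_sum_div_mul_sum_mul s hV hC hM
    _ ≤ 2 * (ε ^ 2 / 2 * ∑ i ∈ s, M i * C i) := by gcongr
    _ = (∑ i ∈ s, M i * C i) * ε ^ 2 := by ring

end Allocation

/-- Classic optimal sample-size allocation for the Multilevel Monte Carlo
estimator: `N ℓ = (2/ε²) √(Vℓ/Cℓ) Σ_τ √(Vτ Cτ)` saturates the variance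
constraint and minimizes the total cost among all positive allocations. -/
theorem mlmc_optimal_allocation
    (L : ℕ) (ε : ℝ) (hε : 0 < ε)
    (V C : ℕ → ℝ)
    (hV : ∀ ℓ ≤ L, 0 < V ℓ) (hC : ∀ ℓ ≤ L, 0 < C ℓ)
    (N : ℕ → ℝ)
    (hN : ∀ ℓ ≤ L, N ℓ = 2 / ε ^ 2 * Real.sqrt (V ℓ / C ℓ) *
      ∑ τ ∈ range (L + 1), Real.sqrt (V τ * C τ)) :
    (∑ ℓ ∈ range (L + 1), V ℓ / N ℓ = ε ^ 2 / 2) ∧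
    (∑ ℓ ∈ range (L + 1), N ℓ * C ℓ =
      2 / ε ^ 2 * (∑ ℓ ∈ range (L + 1), Real.sqrt (V ℓ * C ℓ)) ^ 2) ∧
    (∀ M : ℕ → ℝ, (∀ ℓ ≤ L, 0 < M ℓ) →
      ∑ ℓ ∈ range (L + 1), V ℓ / M ℓ ≤ ε ^ 2 / 2 →
      2 / ε ^ 2 * (∑ ℓ ∈ range (L + 1), Real.sqrt (V ℓ * C ℓ)) ^ 2 ≤
        ∑ ℓ ∈ range (L + 1), M ℓ * C ℓ) := by
  have hle : ∀ ℓ ∈ range (L + 1), ℓ ≤ L := fun _ ↦ mem_range_succ_iff.1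
  have hV' : ∀ ℓ ∈ range (L + 1), 0 ≤ V ℓ := fun ℓ hℓ ↦ (hV ℓ (hle ℓ hℓ)).le
  have hC' : ∀ ℓ ∈ range (L + 1), 0 ≤ C ℓ := fun ℓ hℓ ↦ (hC ℓ (hle ℓ hℓ)).le
  have hS : ∑ ℓ ∈ range (L + 1), √(V ℓ * C ℓ) ≠ 0 := (sum_pos (fun ℓ hℓ ↦
    sqrt_pos.2 (mul_pos (hV ℓ (hle ℓ hℓ)) (hC ℓ (hle ℓ hℓ)))) nonempty_range_add_one).ne'
  have hN' : ∀ ℓ ∈ range (L + 1), N ℓ = optimalAllocation (range (L + 1)) ε V C ℓ :=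
    fun ℓ hℓ ↦ by rw [hN ℓ (hle ℓ hℓ), optimalAllocation]; ring
  refine ⟨?_, ?_, fun M hM ↦ optimalCost_le_sum_mul hε.ne' hV' hC' fun ℓ hℓ ↦ hM ℓ (hle ℓ hℓ)⟩
  · rw [sum_congr rfl fun ℓ hℓ ↦ by rw [hN' ℓ hℓ]]
    exact sum_div_optimalAllocation hε.ne' hV' hC' hS
  · rw [sum_congr rfl fun ℓ hℓ ↦ by rw [hN' ℓ hℓ]]
    exact sum_optimalAllocation_mul hC'
end

section
/- Let (Ω, P) be a probability space, L a natural number, N_0 ≥ N_1 ≥ ... ≥ N_L positive integers, and for each k = 0, ..., L and each n = 1, ..., N_k and each level ℓ = 0, ..., k let D_{ℓ,k,n} : Ω → ℝ be an integrable random variable with E[D_{ℓ,k,n}] = μ_ℓ − μ_{ℓ−1}, where μ_{−1} = 0 and μ_0, ..., μ_L are given real numbers. Then the Multigrid Multilevel Monte Carlo estimator with sample recycling, Q_reuse = Σ_{ℓ=0}^{L} (1 / Σ_{i=ℓ}^{L} N_i) Σ_{k=ℓ}^{L} Σ_{n=1}^{N_k} D_{ℓ,k,n}, is unbiased for μ_L,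 i.e., E[Q_reuse] = μ_L. -/
/-!
Each level term of the estimator is the plain average of `∑_{k ≥ ℓ} N_k` integrable variables
which all have mean `μ_ℓ - μ_{ℓ-1}`, so recycling only changes the number of samples averaged,
not their common mean. By linearity of the integral the estimator therefore has mean
`∑_ℓ (μ_ℓ - μ_{ℓ-1})`, which telescopes to `μ_L`.
-/

open Finset MeasureTheory

theorem sum_range_succ_sub_ite_pred {M : Type*} [AddCommGroup M] (f : ℕ → M) (n : ℕ) :
    ∑ ℓ ∈ range (n + 1), (f ℓ - if ℓ = 0 then 0 else f (ℓ - 1)) = f n := by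
  induction n with
  | zero => simp
  | succ n ih => rw [sum_range_succ, ih]; simp

section Averages

variable {Ω : Type*} [MeasurableSpace Ω] {P : Measure Ω}

theorem integral_inv_card_mul_sum_eq {ι : Type*} {s : Finset ι} (hs : s.Nonempty)
    {X : ι → Ω → ℝ} {c : ℝ} (hX : ∀ i ∈ s, Integrable (X i) P)
    (hmean : ∀ i ∈ s, ∫ ω, X i ω ∂P = c) :
    ∫ ω, (#s : ℝ)⁻¹ * ∑ i ∈ s, X i ω ∂P = c := by
  rw [integral_const_mul, integral_finsetSum s hX, sum_congr rfl hmean, sum_const,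
    nsmul_eq_mul, inv_mul_cancel_left₀ (by exact_mod_cast hs.card_ne_zero)]

theorem integral_inv_sum_mul_sum_sum_eq {κ : Type*} {t : Finset κ} {N : κ → ℕ}
    (hN : ∃ k ∈ t, 0 < N k) {X : κ → ℕ → Ω → ℝ} {c : ℝ}
    (hX : ∀ k ∈ t, ∀ n < N k, Integrable (X k n) P)
    (hmean : ∀ k ∈ t, ∀ n < N k, ∫ ω, X k n ω ∂P = c) :
    ∫ ω, (∑ k ∈ t, (N k : ℝ))⁻¹ * ∑ k ∈ t, ∑ n ∈ range (N k), X k n ω ∂P = c := by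
  have hcard : ∑ k ∈ t, (N k : ℝ) = #(t.sigma fun k => range (N k)) := by
    rw [card_sigma]; push_cast; simp only [card_range]
  simp_rw [hcard, sum_sigma' t fun k => range (N k)]
  obtain ⟨k, hk, hNk⟩ := hN
  have hne : (t.sigma fun k => range (N k)).Nonempty :=
    ⟨⟨k, 0⟩, mem_sigma.2 ⟨hk, mem_range.2 hNk⟩⟩
  refine integral_inv_card_mul_sum_eq hne (fun x hx => ?_) (fun x hx => ?_) <;>
    rw [mem_sigma, mem_range] at hx
  exacts [hX _ hx.1 _ hx.2, hmean _ hx.1 _ hx.2]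

end Averages

theorem mgmlmc_unbiased_general
    {Ω : Type*} [MeasurableSpace Ω] (P : Measure Ω)
    (L : ℕ) (N : ℕ → ℕ) (hNpos : ∀ k ≤ L, 0 < N k)
    (D : ℕ → ℕ → ℕ → Ω → ℝ) (μ : ℕ → ℝ)
    (hint : ∀ ℓ k, ℓ ≤ k → k ≤ L → ∀ n < N k, Integrable (D ℓ k n) P)
    (hmean : ∀ ℓ k, ℓ ≤ k → k ≤ L → ∀ n < N k,
      ∫ ω, D ℓ k n ω ∂P = μ ℓ - (if ℓ = 0 then 0 else μ (ℓ - 1))) :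
    ∫ ω, (∑ ℓ ∈ range (L + 1),
        (∑ i ∈ Icc ℓ L, (N i : ℝ))⁻¹ *
          ∑ k ∈ Icc ℓ L, ∑ n ∈ range (N k), D ℓ k n ω) ∂P = μ L := by
  have hint_level : ∀ ℓ ∈ range (L + 1), Integrable (fun ω =>
      (∑ i ∈ Icc ℓ L, (N i : ℝ))⁻¹ * ∑ k ∈ Icc ℓ L, ∑ n ∈ range (N k), D ℓ k n ω) P :=
    fun ℓ _ => (integrable_finsetSum _ fun k hk => integrable_finsetSum _ fun n hn =>
      hint ℓ k (mem_Icc.1 hk).1 (mem_Icc.1 hk).2 n (mem_range.1 hn)).const_mul _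
  rw [integral_finsetSum _ hint_level, ← sum_range_succ_sub_ite_pred μ L]
  refine sum_congr rfl fun ℓ hℓ => ?_
  have hℓL : ℓ ≤ L := Nat.lt_succ_iff.1 (mem_range.1 hℓ)
  exact integral_inv_sum_mul_sum_sum_eq ⟨ℓ, mem_Icc.2 ⟨le_rfl, hℓL⟩, hNpos ℓ hℓL⟩
    (fun k hk => hint ℓ k (mem_Icc.1 hk).1 (mem_Icc.1 hk).2)
    (fun k hk => hmean ℓ k (mem_Icc.1 hk).1 (mem_Icc.1 hk).2)

/-- Unbiasedness of the Multigrid Multilevel Monte Carlo estimator with sample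
recycling: if every level-`ℓ` difference `D ℓ k n` (evaluated at the `n`-th
sample drawn for level `k ≥ ℓ`) has expectation `μ ℓ - μ (ℓ-1)` (with
`μ₋₁ = 0`), then the MG-MLMC estimator has expectation `μ L`. -/
theorem mgmlmc_unbiased
    {Ω : Type*} [MeasurableSpace Ω] (P : Measure Ω) [IsProbabilityMeasure P]
    (L : ℕ) (N : ℕ → ℕ) (hNpos : ∀ k ≤ L, 0 < N k)
    (hNdec : ∀ k, k < L → N (k + 1) ≤ N k)
    (D : ℕ → ℕ → ℕ → Ω → ℝ) (μ : ℕ → ℝ)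
    (hint : ∀ ℓ k, ℓ ≤ k → k ≤ L → ∀ n < N k, Integrable (D ℓ k n) P)
    (hmean : ∀ ℓ k, ℓ ≤ k → k ≤ L → ∀ n < N k,
      ∫ ω, D ℓ k n ω ∂P = μ ℓ - (if ℓ = 0 then 0 else μ (ℓ - 1))) :
    ∫ ω, (∑ ℓ ∈ range (L + 1),
        (∑ i ∈ Icc ℓ L, (N i : ℝ))⁻¹ *
          ∑ k ∈ Icc ℓ L, ∑ n ∈ range (N k), D ℓ k n ω) ∂P = μ L :=
  mgmlmc_unbiased_general P L N hNpos D μ hint hmean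
end
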